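/- The curve S is not contained in any hyperplane of ℙ^n(ℂ): if L_0, …, L_n ∈ ℂ are such that L_0 x_0 + L_1 x_1 + ⋯ + L_n x_n = 0 for every nonzero x ∈ ℂ^{n+1} satisfying the defining equations of S, then L_0 = L_1 = ⋯ = L_n = 0. -/

import Mathlib

/-
The curve has a point with all coordinates nonzero: prescribe `x₀ᵏ = s`, `x₁ᵏ = 1` and
`x_{i+2}ᵏ = -(λᵢ s + 1)` for a generic `s`, and take `k`-th roots. Multiplying one coordinate
`x_j` by a primitive `k`-th root of unity `ζ` keeps the point on the curve, so a linear form `L`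
vanishing on the curve satisfies `L_j x_j (ζ - 1) = 0`, whence `L_j = 0`.
-/

open Fin.NatCast in
/-- A nonzero vector `x ∈ ℂ^{n+1}` satisfies the defining equations of the generalized
Fermat curve of type `(k,n)`: `lam i * x₀^k + x₁^k + x_{i+2}^k = 0` for `0 ≤ i ≤ n - 2`
(with `lam 0 = 1`). -/
def fermatEqns (n k : ℕ) (lam : ℕ → ℂ) (x : Fin (n + 1) → ℂ) : Prop :=
  ∀ i : ℕ, i ≤ n - 2 → lam i * x 0 ^ k + x 1 ^ k + x ((i + 2 : ℕ) : Fin (n + 1)) ^ k = 0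

open Function Matrix

theorem dotProduct_update_sub {ι K : Type*} [Fintype ι] [DecidableEq ι] [CommRing K]
    (v x : ι → K) (j : ι) (c : K) :
    v ⬝ᵥ update x j c - v ⬝ᵥ x = v j * (c - x j) := by
  simp only [dotProduct, ← Finset.sum_sub_distrib, ← mul_sub]
  rw [Finset.sum_eq_single j (fun i _ hij => by simp [update_of_ne hij]) (by simp), update_self]

theorem eq_zero_of_dotProduct_update_mul_eq_zero {ι K : Type*} [Fintype ι] [DecidableEq ι]
    [CommRing K] [NoZeroDivisors K] {L x : ι → K} {ζ : K} (hζ : ζ ≠ 1) (hx : ∀ j, x j ≠ 0)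
    (hLx : L ⬝ᵥ x = 0)
    (hLζx : ∀ j, L ⬝ᵥ update x j (ζ * x j) = 0) : L = 0 := by
  funext j
  have h := dotProduct_update_sub L x j (ζ * x j)
  rw [hLx, hLζx, sub_zero, ← sub_one_mul, eq_comm] at h
  simpa [hx j, sub_eq_zero, hζ] using h

theorem exists_ne_zero_forall_mul_add_one_ne_zero {K : Type*} [Field K] [Infinite K]
    (a : ℕ → K) (N : ℕ) : ∃ s : K, s ≠ 0 ∧ ∀ i < N, a i * s + 1 ≠ 0 := by
  classical
  obtain ⟨s, hs⟩ := Infinite.exists_notMem_finset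
    (insert 0 ((Finset.range N).image fun i => -(a i)⁻¹))
  refine ⟨s, fun h => hs (by simp [h]), fun i hi h => hs ?_⟩
  have has : a i * s = -1 := eq_neg_of_add_eq_zero_left h
  have hs_eq : -s = (a i)⁻¹ := eq_inv_of_mul_eq_one_right (by rw [mul_neg, has, neg_neg])
  exact Finset.mem_insert_of_mem
    (Finset.mem_image.2 ⟨i, Finset.mem_range.2 hi, by rw [← hs_eq, neg_neg]⟩)

theorem fermatEqns.of_pow_eq {n k : ℕ} {lam : ℕ → ℂ} {x y : Fin (n + 1) → ℂ}
    (hx : fermatEqns n k lam x) (hxy : ∀ m, y m ^ k = x m ^ k) : fermatEqns n k lam y := by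
  intro i hi
  simpa only [hxy] using hx i hi

open Fin.NatCast in
theorem exists_fermatEqns_forall_ne_zero {n k : ℕ} (hk : k ≠ 0) (hn : 2 ≤ n) (lam : ℕ → ℂ) :
    ∃ x : Fin (n + 1) → ℂ, (∀ j, x j ≠ 0) ∧ fermatEqns n k lam x := by
  obtain ⟨s, hs0, hs⟩ := exists_ne_zero_forall_mul_add_one_ne_zero lam (n - 1)
  let y : ℕ → ℂ := fun m => if m = 0 then s else if m = 1 then 1 else -(lam (m - 2) * s + 1)
  have hy : ∀ m ≤ n, y m ≠ 0 := by
    intro m hm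
    rcases m with _ | _ | m
    · simpa [y] using hs0
    · simp [y]
    · show (if m + 2 = 0 then s else if m + 2 = 1 then 1 else -(lam (m + 2 - 2) * s + 1)) ≠ 0
      rw [if_neg (by omega), if_neg (by omega), Nat.add_sub_cancel]
      exact neg_ne_zero.2 (hs m (by omega))
  choose r hr using fun m => IsAlgClosed.exists_pow_nat_eq (y m) (Nat.pos_of_ne_zero hk)
  refine ⟨fun j => r j, fun j (h : r j = 0) => hy j (Nat.lt_succ_iff.1 j.is_lt) ?_, fun i hi => ?_⟩
  · rw [← hr, h, zero_pow hk]
  · have h1 : (1 : Fin (n + 1)).val = 1 := Nat.mod_eq_of_lt (show 1 < n + 1 by omega)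
    have hi2 : ((i + 2 : ℕ) : Fin (n + 1)).val = i + 2 :=
      Fin.val_cast_of_lt (show i + 2 < n + 1 by omega)
    simp only [hr, h1, hi2, y]
    simp

theorem stmt_12_general (k n : ℕ) (hk : 2 ≤ k) (hn : 2 ≤ n)
    (lam : ℕ → ℂ)
    (L : Fin (n + 1) → ℂ)
    (hL : ∀ x : Fin (n + 1) → ℂ, x ≠ 0 → fermatEqns n k lam x →
      ∑ j : Fin (n + 1), L j * x j = 0) :
    L = 0 := by
  have hL' : ∀ x, (∀ j, x j ≠ 0) → fermatEqns n k lam x → L ⬝ᵥ x = 0 :=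
    fun x hx hS => hL x (fun h => hx 0 (congrFun h 0)) hS
  obtain ⟨x, hx, hS⟩ := exists_fermatEqns_forall_ne_zero (show k ≠ 0 by omega) hn lam
  have hζ := Complex.isPrimitiveRoot_exp k (by omega)
  refine eq_zero_of_dotProduct_update_mul_eq_zero (hζ.ne_one hk) hx (hL' x hx hS) fun j => ?_
  refine hL' _ (fun m => ?_) (hS.of_pow_eq fun m => ?_)
  · rcases eq_or_ne m j with rfl | h
    · rw [update_self]
      exact mul_ne_zero (hζ.ne_zero (by omega)) (hx m)
    · rw [update_of_ne h]
      exact hx m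
  · rcases eq_or_ne m j with rfl | h
    · rw [update_self, mul_pow, hζ.pow_eq_one, one_mul]
    · rw [update_of_ne h]

/-- the generalized Fermat curve `S` of type `(k,n)` is not contained in any
hyperplane of `ℙⁿ(ℂ)`: a linear form vanishing on all nonzero solutions of the defining
equations of `S` is identically zero. -/
theorem stmt_12 (k n : ℕ) (hk : 2 ≤ k) (hn : 2 ≤ n)
    (lam : ℕ → ℂ) (hlam0 : lam 0 = 1)
    (hlam_ne0 : ∀ i, 1 ≤ i → i ≤ n - 2 → lam i ≠ 0)
    (hlam_ne1 : ∀ i, 1 ≤ i → i ≤ n - 2 → lam i ≠ 1)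
    (hlam_inj : ∀ i j, i ≤ n - 2 → j ≤ n - 2 → lam i = lam j → i = j)
    (L : Fin (n + 1) → ℂ)
    (hL : ∀ x : Fin (n + 1) → ℂ, x ≠ 0 → fermatEqns n k lam x →
      ∑ j : Fin (n + 1), L j * x j = 0) :
    L = 0 :=
  stmt_12_general k n hk hn lam L hL
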